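/- Let p be an odd prime, k ≥ 1, and G = D_{p^k}. Then p^k α − 1 is an eigenvalue of the matrix A_α(S_G) = α·D + (1−α)·A with multiplicity at least p^k − 2, and (p^k + 1)α − 1 is an eigenvalue with multiplicity at least p^k − 1, for any real α. -/

import Mathlib

def superpowerGraph (G : Type*) [Group G] : SimpleGraph G where
  Adj a b := a ≠ b ∧ (orderOf a ∣ orderOf b ∨ orderOf b ∣ orderOf a)
  symm := ⟨fun _ _ h => ⟨h.1.symm, h.2.symm⟩⟩
  loopless := ⟨fun _ h => h.1 rfl⟩

noncomputable instance (G : Type*) [Group G] [DecidableEq G] :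
    DecidableRel (superpowerGraph G).Adj :=
  fun a b => show Decidable (a ≠ b ∧ (orderOf a ∣ orderOf b ∨ orderOf b ∣ orderOf a)) from
    instDecidableAnd

/-!
For `n = p ^ k` odd, the nontrivial rotations of `D_n` have pairwise comparable odd orders
`> 1`, so they form a clique with no edge to a reflection; the reflections (order `2`) form a
clique joined only to the identity. Hence any two nontrivial rotations, and any two reflections,
are true twins. For true twins `a, b` of degree `d`, `e_a - e_b` is an eigenvector of `A_α` with
eigenvalue `(d + 1) α - 1`. Fixing one rotation (degree `n - 1`) resp. one reflection (degree `n`)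
gives `n - 2` resp. `n - 1` independent such eigenvectors, and the geometric multiplicity of an
eigenvalue bounds its algebraic multiplicity.
-/

open Polynomial Matrix Finset

theorem Matrix.card_le_rootMultiplicity_charpoly {K n ι : Type*} [Field K] [Fintype n]
    [DecidableEq n] [Fintype ι] (M : Matrix n n K) {μ : K} {v : ι → n → K}
    (hv : LinearIndependent K v) (hMv : ∀ i, M *ᵥ v i = μ • v i) :
    Fintype.card ι ≤ M.charpoly.rootMultiplicity μ := by
  have hspan : Submodule.span K (Set.range v) ≤ Module.End.eigenspace (toLin' M) μ :=
    Submodule.span_le.2 <| Set.range_subset_iff.2 fun i => by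
      simpa [Module.End.mem_eigenspace_iff] using hMv i
  calc Fintype.card ι = Module.finrank K (Submodule.span K (Set.range v)) :=
        (finrank_span_eq_card hv).symm
    _ ≤ Module.finrank K (Module.End.eigenspace (toLin' M) μ) := Submodule.finrank_mono hspan
    _ ≤ (toLin' M).charpoly.rootMultiplicity μ := LinearMap.finrank_eigenspace_le _ _
    _ = M.charpoly.rootMultiplicity μ := by rw [charpoly_toLin']

theorem linearIndependent_single_sub_single {R V : Type*} [Ring R] [DecidableEq V]
    {a : V} {s : Finset V} (ha : a ∉ s) :
    LinearIndependent R (fun b : s => (Pi.single a 1 - Pi.single (b : V) 1 : V → R)) := by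
  rw [Fintype.linearIndependent_iff]
  intro g hg b
  have hb : a ≠ b := fun h => ha (h ▸ b.2)
  have := congrFun hg b
  simp only [Finset.sum_apply, Pi.smul_apply, Pi.sub_apply, smul_eq_mul, Pi.zero_apply,
    Pi.single_apply, hb.symm, if_false, zero_sub, mul_neg, Finset.sum_neg_distrib,
    neg_eq_zero] at this
  simpa [← Subtype.ext_iff] using this

namespace SimpleGraph

variable {V : Type*} (G : SimpleGraph V)

def IsTrueTwin (a b : V) : Prop :=
  G.Adj a b ∧ ∀ x, x ≠ a → x ≠ b → (G.Adj x a ↔ G.Adj x b)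

variable [Fintype V] [DecidableEq V] [DecidableRel G.Adj]

def alphaAdjMatrix {R : Type*} [Ring R] (α : R) : Matrix V V R :=
  α • diagonal (fun v => (G.degree v : R)) + (1 - α) • G.adjMatrix R

variable {G}

theorem IsTrueTwin.neighborFinset_erase {a b : V} (h : G.IsTrueTwin a b) :
    (G.neighborFinset a).erase b = (G.neighborFinset b).erase a := by
  ext x
  simp only [mem_erase, mem_neighborFinset]
  by_cases hxa : x = a
  · subst hxa; simp
  by_cases hxb : x = b
  · subst hxb; simp
  simp only [hxa, hxb, ne_eq, not_false_eq_true, true_and]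
  rw [G.adj_comm a, G.adj_comm b]
  exact h.2 x hxa hxb

theorem IsTrueTwin.degree_eq {a b : V} (h : G.IsTrueTwin a b) : G.degree a = G.degree b := by
  rw [← card_neighborFinset_eq_degree, ← card_neighborFinset_eq_degree,
    ← card_erase_add_one ((mem_neighborFinset _ _ _).2 h.1),
    ← card_erase_add_one ((mem_neighborFinset _ _ _).2 h.1.symm), h.neighborFinset_erase]

theorem IsTrueTwin.alphaAdjMatrix_mulVec {R : Type*} [CommRing R] (α : R) {a b : V}
    (h : G.IsTrueTwin a b) :
    G.alphaAdjMatrix α *ᵥ (Pi.single a 1 - Pi.single b 1)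
      = ((G.degree a + 1) * α - 1) • (Pi.single a 1 - Pi.single b 1) := by
  have hab := G.ne_of_adj h.1
  ext x
  have hA : (G.adjMatrix R *ᵥ (Pi.single a 1 - Pi.single b 1)) x
      = (if G.Adj x a then 1 else 0) - (if G.Adj x b then 1 else 0) := by
    simp [adj_comm]
  simp only [alphaAdjMatrix, add_mulVec, smul_mulVec, Pi.add_apply, Pi.smul_apply, hA,
    mulVec_diagonal, smul_eq_mul, Pi.sub_apply, Pi.single_apply]
  by_cases hxa : x = a
  · subst hxa
    simp only [↓reduceIte, hab, sub_zero, mul_one, SimpleGraph.irrefl, h.1, zero_sub, mul_neg,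
      neg_sub]
    ring
  by_cases hxb : x = b
  · subst hxb
    simp only [hab.symm, ↓reduceIte, zero_sub, mul_neg, mul_one, h.1.symm, SimpleGraph.irrefl,
      sub_zero, h.degree_eq, neg_sub]
    ring
  simp [hxa, hxb, h.2 x hxa hxb]

theorem card_le_rootMultiplicity_alphaAdjMatrix {K : Type*} [Field K] (α : K) {a : V}
    {s : Finset V} (hs : ∀ b ∈ s, G.IsTrueTwin a b) :
    #s ≤ (G.alphaAdjMatrix α).charpoly.rootMultiplicity ((G.degree a + 1) * α - 1) := by
  have ha : a ∉ s := fun ha => G.loopless.irrefl a (hs a ha).1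
  simpa using (G.alphaAdjMatrix α).card_le_rootMultiplicity_charpoly
    (linearIndependent_single_sub_single (R := K) ha)
    fun b => (hs b b.2).alphaAdjMatrix_mulVec α

end SimpleGraph

theorem Nat.dvd_or_dvd_of_dvd_prime_pow {p k a b : ℕ} (hp : p.Prime) (ha : a ∣ p ^ k)
    (hb : b ∣ p ^ k) : a ∣ b ∨ b ∣ a := by
  obtain ⟨i, -, rfl⟩ := (Nat.dvd_prime_pow hp).1 ha
  obtain ⟨j, -, rfl⟩ := (Nat.dvd_prime_pow hp).1 hb
  exact (le_total i j).imp (pow_dvd_pow p) (pow_dvd_pow p)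

namespace DihedralGroup

variable {n : ℕ}

theorem orderOf_r_dvd [NeZero n] (i : ZMod n) : orderOf (r i) ∣ n := by
  rw [orderOf_r]
  exact Nat.div_dvd_of_dvd (Nat.gcd_dvd_left _ _)

theorem orderOf_r_eq_one_iff {i : ZMod n} : orderOf (r i) = 1 ↔ i = 0 := by
  rw [orderOf_eq_one_iff, one_def, r.injEq]

theorem superpowerGraph_adj_sr_sr {i j : ZMod n} :
    (superpowerGraph (DihedralGroup n)).Adj (sr i) (sr j) ↔ i ≠ j := by
  simp [superpowerGraph, orderOf_sr]

theorem superpowerGraph_adj_r_r [NeZero n]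
    (hn : ∀ a b, a ∣ n → b ∣ n → a ∣ b ∨ b ∣ a) {i j : ZMod n} :
    (superpowerGraph (DihedralGroup n)).Adj (r i) (r j) ↔ i ≠ j := by
  simp [superpowerGraph, hn _ _ (orderOf_r_dvd i) (orderOf_r_dvd j)]

theorem superpowerGraph_adj_r_sr [NeZero n] (hn : Odd n) {i j : ZMod n} :
    (superpowerGraph (DihedralGroup n)).Adj (r i) (sr j) ↔ i = 0 := by
  have hodd : Odd (orderOf (r i)) := hn.of_dvd_nat (orderOf_r_dvd i)
  simp only [superpowerGraph, ne_eq, reduceCtorEq, not_false_eq_true, true_and, orderOf_sr,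
    ← orderOf_r_eq_one_iff (n := n)]
  constructor
  · rintro (h | h)
    · rcases (Nat.dvd_prime Nat.prime_two).1 h with h | h
      · exact h
      · exact absurd (h ▸ hodd) (by decide)
    · exact absurd (hodd.of_dvd_nat h) (by decide)
  · intro h
    exact Or.inl (h ▸ one_dvd 2)

theorem superpowerGraph_degree_r [NeZero n] (hn : ∀ a b, a ∣ n → b ∣ n → a ∣ b ∨ b ∣ a)
    (hodd : Odd n) {i : ZMod n} (hi : i ≠ 0) :
    (superpowerGraph (DihedralGroup n)).degree (r i) = n - 1 := by
  have : (superpowerGraph (DihedralGroup n)).neighborFinset (r i) = (univ.erase i).image r := by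
    ext (j | j) <;>
      simp [superpowerGraph_adj_r_r hn, superpowerGraph_adj_r_sr hodd, hi, eq_comm]
  rw [← SimpleGraph.card_neighborFinset_eq_degree, this,
    card_image_of_injective _ fun _ _ => r.inj, card_erase_of_mem (mem_univ i), card_univ,
    ZMod.card]

theorem superpowerGraph_degree_sr [NeZero n] (hodd : Odd n) (i : ZMod n) :
    (superpowerGraph (DihedralGroup n)).degree (sr i) = n := by
  have : (superpowerGraph (DihedralGroup n)).neighborFinset (sr i)
      = insert (r 0) ((univ.erase i).image sr) := by
    ext (j | j) <;>
      simp [superpowerGraph_adj_sr_sr, superpowerGraph_adj_r_sr hodd, SimpleGraph.adj_comm,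
        eq_comm, -r_zero]
  rw [← SimpleGraph.card_neighborFinset_eq_degree, this,
    card_insert_of_notMem (by simp [-r_zero]), card_image_of_injective _ fun _ _ => sr.inj,
    card_erase_of_mem (mem_univ i), card_univ, ZMod.card, Nat.sub_add_cancel NeZero.one_le]

theorem superpowerGraph_isTrueTwin_r_r [NeZero n] (hn : ∀ a b, a ∣ n → b ∣ n → a ∣ b ∨ b ∣ a)
    (hodd : Odd n) {i j : ZMod n} (hi : i ≠ 0) (hj : j ≠ 0) (hij : i ≠ j) :
    (superpowerGraph (DihedralGroup n)).IsTrueTwin (r i) (r j) := by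
  refine ⟨(superpowerGraph_adj_r_r hn).2 hij, ?_⟩
  rintro (m | m) hmi hmj
  · simp_all [superpowerGraph_adj_r_r hn]
  · simp [SimpleGraph.adj_comm _ (sr m), superpowerGraph_adj_r_sr hodd, hi, hj]

theorem superpowerGraph_isTrueTwin_sr_sr [NeZero n] (hodd : Odd n) {i j : ZMod n}
    (hij : i ≠ j) :
    (superpowerGraph (DihedralGroup n)).IsTrueTwin (sr i) (sr j) := by
  refine ⟨superpowerGraph_adj_sr_sr.2 hij, ?_⟩
  rintro (m | m) hmi hmj
  · simp [superpowerGraph_adj_r_sr hodd]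
  · simp_all [superpowerGraph_adj_sr_sr]

theorem sub_two_le_rootMultiplicity_alphaAdjMatrix [Fact (1 < n)]
    (hn : ∀ a b, a ∣ n → b ∣ n → a ∣ b ∨ b ∣ a) (hodd : Odd n) {K : Type*} [Field K] (α : K) :
    n - 2 ≤ ((superpowerGraph (DihedralGroup n)).alphaAdjMatrix α).charpoly.rootMultiplicity
      (n * α - 1) := by
  set G := superpowerGraph (DihedralGroup n)
  calc n - 2 = #((univ \ {0, 1}).image (r : ZMod n → _)) := by
        rw [card_image_of_injective _ fun _ _ => r.inj, card_sdiff_of_subset (subset_univ _),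
          card_pair zero_ne_one, card_univ, ZMod.card]
    _ ≤ (G.alphaAdjMatrix α).charpoly.rootMultiplicity ((G.degree (r 1) + 1) * α - 1) :=
        G.card_le_rootMultiplicity_alphaAdjMatrix α <| by
          simp only [mem_image, mem_sdiff, mem_univ, true_and, mem_insert, mem_singleton,
            not_or, forall_exists_index, and_imp]
          rintro _ j hj0 hj1 rfl
          exact superpowerGraph_isTrueTwin_r_r hn hodd one_ne_zero hj0 (Ne.symm hj1)
    _ = (G.alphaAdjMatrix α).charpoly.rootMultiplicity (n * α - 1) := by
        rw [superpowerGraph_degree_r hn hodd one_ne_zero, Nat.cast_pred (NeZero.pos _),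
          sub_add_cancel]

theorem sub_one_le_rootMultiplicity_alphaAdjMatrix [NeZero n] (hodd : Odd n) {K : Type*}
    [Field K] (α : K) :
    n - 1 ≤ ((superpowerGraph (DihedralGroup n)).alphaAdjMatrix α).charpoly.rootMultiplicity
      ((n + 1) * α - 1) := by
  set G := superpowerGraph (DihedralGroup n)
  calc n - 1 = #((univ.erase 0).image (sr : ZMod n → _)) := by
        rw [card_image_of_injective _ fun _ _ => sr.inj, card_erase_of_mem (mem_univ _),
          card_univ, ZMod.card]
    _ ≤ (G.alphaAdjMatrix α).charpoly.rootMultiplicity ((G.degree (sr 0) + 1) * α - 1) :=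
        G.card_le_rootMultiplicity_alphaAdjMatrix α <| by
          simp only [mem_image, mem_erase, mem_univ, and_true, forall_exists_index, and_imp]
          rintro _ j hj0 rfl
          exact superpowerGraph_isTrueTwin_sr_sr hodd (Ne.symm hj0)
    _ = (G.alphaAdjMatrix α).charpoly.rootMultiplicity ((n + 1) * α - 1) := by
        rw [superpowerGraph_degree_sr hodd]

end DihedralGroup

theorem stmt14 (p k : ℕ) (hp : Fact p.Prime) (hp2 : p ≠ 2) (hk : 1 ≤ k) (α : ℝ) :
    p ^ k - 2 ≤
      Polynomial.rootMultiplicity ((p : ℝ) ^ k * α - 1)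
        (Matrix.charpoly
          (α • Matrix.diagonal
              (fun v : DihedralGroup (p ^ k) => ((superpowerGraph _).degree v : ℝ)) +
            (1 - α) • (superpowerGraph (DihedralGroup (p ^ k))).adjMatrix ℝ)) ∧
    p ^ k - 1 ≤
      Polynomial.rootMultiplicity (((p : ℝ) ^ k + 1) * α - 1)
        (Matrix.charpoly
          (α • Matrix.diagonal
              (fun v : DihedralGroup (p ^ k) => ((superpowerGraph _).degree v : ℝ)) +
            (1 - α) • (superpowerGraph (DihedralGroup (p ^ k))).adjMatrix ℝ)) := by
  have : Fact (1 < p ^ k) := ⟨Nat.one_lt_pow (by omega) hp.out.one_lt⟩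
  have hchain (a b : ℕ) : a ∣ p ^ k → b ∣ p ^ k → a ∣ b ∨ b ∣ a :=
    Nat.dvd_or_dvd_of_dvd_prime_pow hp.out
  have hodd : Odd (p ^ k) := (hp.out.odd_of_ne_two hp2).pow
  have hrot := DihedralGroup.sub_two_le_rootMultiplicity_alphaAdjMatrix hchain hodd α
  have hrefl := DihedralGroup.sub_one_le_rootMultiplicity_alphaAdjMatrix hodd α
  push_cast at hrot hrefl
  exact ⟨hrot, hrefl⟩
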